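/- arXiv:1309.0039 — 8 statements merged into one kernel-verified Lean document; each statement's English description precedes it below -/
import Mathlib

section
/- Let K be a field, k ≥ 1, and let A_1, ..., A_k be square matrices over K with A_i of size n_i × n_i (each n_i ≥ 1). Then there exists a completion M of the block diagonal partial matrix diag(A_1, ..., A_k) with rank(M) = max{rank(A_i) : i = 1, ..., k}. Consequently the minimum of the ranks of all completions of diag(A_1, ..., A_k) equals max{rank(A_i) : i = 1, ..., k}. -/
/-!
Each diagonal block factors through `K^r` with `r = maxᵢ rank (A i)`, say `A i = B i * C i`
with `B i` of width `r`. Stacking the `B i` vertically and the `C i` horizontally gives a matrix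
`B * C` whose `(i, i)` block is `A i` and whose rank is at most `r`. Conversely every diagonal
block is a submatrix of a completion, so no completion has rank below `r`.
-/

/-- `M` is a completion of the block diagonal partial matrix
`diag (A 0, ..., A (k-1))`: its `(i,i)` diagonal block equals `A i` for every `i`. -/
def IsCompletion {K : Type*} [Field K] {k : ℕ} {n : Fin k → ℕ}
    (A : ∀ i : Fin k, Matrix (Fin (n i)) (Fin (n i)) K)
    (M : Matrix (Σ i : Fin k, Fin (n i)) (Σ i : Fin k, Fin (n i)) K) : Prop :=
  ∀ (i : Fin k) (x y : Fin (n i)), M ⟨i, x⟩ ⟨i, y⟩ = A i x y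

namespace Matrix

variable {K : Type*} [Field K] {m n : Type*} [Fintype n]

theorem exists_fin_rank_mul_eq (A : Matrix m n K) :
    ∃ (B : Matrix m (Fin A.rank) K) (C : Matrix (Fin A.rank) n K), B * C = A := by
  set V := Submodule.span K (Set.range A.col)
  have : Module.Finite K V := Module.Finite.span_of_finite K (Set.finite_range _)
  let b : Module.Basis (Fin A.rank) K V :=
    Module.finBasisOfFinrankEq K V (rank_eq_finrank_span_cols A).symm
  have hcol : ∀ j, A.col j ∈ V := fun j => Submodule.subset_span ⟨j, rfl⟩
  refine ⟨of fun i t => (b t : m → K) i, of fun t j => b.repr ⟨A.col j, hcol j⟩ t, ?_⟩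
  ext i j
  have hsum := congrArg (fun v : V => (v : m → K) i) (b.sum_repr ⟨A.col j, hcol j⟩)
  simp only [Submodule.coe_sum, Submodule.coe_smul, Finset.sum_apply, Pi.smul_apply,
    smul_eq_mul, col_apply] at hsum
  simpa only [mul_apply, of_apply, mul_comm] using hsum

theorem exists_mul_eq_of_rank_le (A : Matrix m n K) {r : ℕ} (h : A.rank ≤ r) :
    ∃ (B : Matrix m (Fin r) K) (C : Matrix (Fin r) n K), B * C = A := by
  obtain ⟨B, C, hBC⟩ := exists_fin_rank_mul_eq A
  refine ⟨B * (1 : Matrix (Fin r) (Fin r) K).submatrix (Fin.castLE h) id,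
    (1 : Matrix (Fin r) (Fin r) K).submatrix id (Fin.castLE h) * C, ?_⟩
  have hpad : (1 : Matrix (Fin r) (Fin r) K).submatrix (Fin.castLE h) id *
      (1 : Matrix (Fin r) (Fin r) K).submatrix id (Fin.castLE h) = 1 := by
    rw [← submatrix_mul _ _ _ id _ Function.bijective_id, mul_one,
      submatrix_one _ (Fin.castLE_injective h)]
  rw [Matrix.mul_assoc, ← Matrix.mul_assoc _ _ C, hpad, Matrix.one_mul, hBC]

end Matrix

section Completion

variable {K : Type*} [Field K] {k : ℕ} {n : Fin k → ℕ}
  {A : ∀ i : Fin k, Matrix (Fin (n i)) (Fin (n i)) K}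

theorem IsCompletion.rank_le {M : Matrix (Σ i : Fin k, Fin (n i)) (Σ i : Fin k, Fin (n i)) K}
    (hM : IsCompletion A M) (i : Fin k) : (A i).rank ≤ M.rank := by
  have hblock : M.submatrix (Sigma.mk i) (Sigma.mk i) = A i := by
    ext x y
    exact hM i x y
  exact hblock ▸ M.rank_submatrix_le _ _

theorem isCompletion_stack_mul_stack {ι : Type*} [Fintype ι]
    {B : ∀ i : Fin k, Matrix (Fin (n i)) ι K} {C : ∀ i : Fin k, Matrix ι (Fin (n i)) K}
    (hBC : ∀ i, B i * C i = A i) :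
    IsCompletion A (Matrix.of (fun p t => B p.1 p.2 t) * Matrix.of (fun t q => C q.1 t q.2)) := by
  intro i x y
  rw [← hBC]
  rfl

end Completion

theorem stmt_1_general {K : Type*} [Field K] {k : ℕ} {n : Fin k → ℕ}
    (A : ∀ i : Fin k, Matrix (Fin (n i)) (Fin (n i)) K) :
    IsLeast {l : ℕ | ∃ M, IsCompletion A M ∧ M.rank = l}
      (Finset.univ.sup (fun i : Fin k => (A i).rank)) := by
  have lower : ∀ M, IsCompletion A M → Finset.univ.sup (fun i => (A i).rank) ≤ M.rank :=
    fun M hM => Finset.sup_le fun i _ => hM.rank_le i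
  refine ⟨?_, fun l ⟨M, hM, hl⟩ => hl ▸ lower M hM⟩
  choose B C hBC using fun i => (A i).exists_mul_eq_of_rank_le
    (Finset.le_sup (f := fun i => (A i).rank) (Finset.mem_univ i))
  have hM := isCompletion_stack_mul_stack hBC
  refine ⟨_, hM, le_antisymm ?_ (lower _ hM)⟩
  exact (Matrix.rank_mul_le_left _ _).trans
    ((Matrix.rank_le_card_width _).trans_eq (Fintype.card_fin _))

theorem stmt_1 {K : Type*} [Field K] {k : ℕ} (hk : 0 < k) {n : Fin k → ℕ}
    (hn : ∀ i, 0 < n i)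
    (A : ∀ i : Fin k, Matrix (Fin (n i)) (Fin (n i)) K) :
    IsLeast {l : ℕ | ∃ M, IsCompletion A M ∧ M.rank = l}
      (Finset.univ.sup (fun i : Fin k => (A i).rank)) :=
  stmt_1_general A
end

section
/- Let K be a field, k ≥ 1, and let A_1, ..., A_k be symmetric square matrices over K with A_i of size n_i × n_i. Suppose for each i there is an invertible n_i × n_i matrix P_i over K and set D_i = P_iᵀ A_i P_i (so each D_i is symmetric and congruent to A_i). Then for every natural number l, there exists a symmetric completion of rank l of the block diagonal partial matrix diag(A_1, ..., A_k) if and only if there exists a symmetric completion of rank l of the block diagonal partial matrix diag(D_1, ..., D_k). -/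
open Matrix

lemma aux_left {K : Type*} [Field K] {k : ℕ} {n : Fin k → ℕ}
    (N : Matrix (Σ i : Fin k, Fin (n i)) (Σ i : Fin k, Fin (n i)) K)
    (P : ∀ i : Fin k, Matrix (Fin (n i)) (Fin (n i)) K)
    (i : Fin k) (x : Fin (n i)) (b : Σ i : Fin k, Fin (n i)) :
    ((blockDiagonal' P)ᵀ * N) ⟨i, x⟩ b = ∑ u, P i u x * N ⟨i, u⟩ b := by
  rw [Matrix.mul_apply, ← Finset.univ_sigma_univ, Finset.sum_sigma, Fintype.sum_eq_single i]
  · simp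
  · intro j hj
    apply Finset.sum_eq_zero
    intro u _
    rw [Matrix.transpose_apply, blockDiagonal'_apply_ne _ _ _ hj, zero_mul]

lemma aux_entry {K : Type*} [Field K] {k : ℕ} {n : Fin k → ℕ}
    (M : Matrix (Σ i : Fin k, Fin (n i)) (Σ i : Fin k, Fin (n i)) K)
    (P : ∀ i : Fin k, Matrix (Fin (n i)) (Fin (n i)) K)
    (i : Fin k) (x y : Fin (n i)) :
    ((blockDiagonal' P)ᵀ * M * blockDiagonal' P) ⟨i, x⟩ ⟨i, y⟩
      = ∑ u, P i u x * ∑ v, M ⟨i, u⟩ ⟨i, v⟩ * P i v y := by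
  rw [Matrix.mul_assoc, aux_left]
  refine Finset.sum_congr rfl fun u _ => ?_
  congr 1
  rw [Matrix.mul_apply, ← Finset.univ_sigma_univ, Finset.sum_sigma, Fintype.sum_eq_single i]
  · simp
  · intro j hj
    apply Finset.sum_eq_zero
    intro v _
    rw [blockDiagonal'_apply_ne _ _ _ hj, mul_zero]

lemma aux_key {K : Type*} [Field K] {k : ℕ} {n : Fin k → ℕ}
    (A : ∀ i : Fin k, Matrix (Fin (n i)) (Fin (n i)) K)
    (P : ∀ i : Fin k, Matrix (Fin (n i)) (Fin (n i)) K)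
    (hP : ∀ i, IsUnit (P i)) (l : ℕ)
    (h : ∃ M, IsCompletion A M ∧ M = Mᵀ ∧ M.rank = l) :
    ∃ M, IsCompletion (fun i => (P i)ᵀ * A i * P i) M ∧ M = Mᵀ ∧ M.rank = l := by
  obtain ⟨M, hcomp, hsym, hrank⟩ := h
  set Q : Matrix (Σ i : Fin k, Fin (n i)) (Σ i : Fin k, Fin (n i)) K := blockDiagonal' P with hQ
  have hmul : ∀ i, P i * (P i)⁻¹ = 1 := fun i =>
    Matrix.mul_nonsing_inv _ ((Matrix.isUnit_iff_isUnit_det _).mp (hP i))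
  have hmul' : ∀ i, (P i)⁻¹ * P i = 1 := fun i =>
    Matrix.nonsing_inv_mul _ ((Matrix.isUnit_iff_isUnit_det _).mp (hP i))
  have hQu : IsUnit Q := by
    refine ⟨⟨Q, blockDiagonal' (fun i => (P i)⁻¹), ?_, ?_⟩, rfl⟩
    · rw [hQ, ← blockDiagonal'_mul,
        show (fun i => P i * (P i)⁻¹) = (1 : ∀ i : Fin k, Matrix (Fin (n i)) (Fin (n i)) K)
          from funext hmul]
      exact blockDiagonal'_one
    · rw [hQ, ← blockDiagonal'_mul,
        show (fun i => (P i)⁻¹ * P i) = (1 : ∀ i : Fin k, Matrix (Fin (n i)) (Fin (n i)) K)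
          from funext hmul']
      exact blockDiagonal'_one
  have hQd : IsUnit Q.det := (Matrix.isUnit_iff_isUnit_det Q).mp hQu
  have hQTd : IsUnit Qᵀ.det := by rwa [Matrix.det_transpose]
  refine ⟨Qᵀ * M * Q, ?_, ?_, ?_⟩
  · intro i x y
    rw [hQ, aux_entry M P i x y]
    simp only [Matrix.mul_apply, Matrix.transpose_apply, Matrix.mul_assoc, hcomp,
      Finset.mul_sum, Finset.sum_mul, mul_assoc]
    rw [Finset.sum_comm]
    exact Finset.sum_congr rfl fun v _ => Finset.sum_congr rfl fun u _ => by
      rw [hcomp i u v]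
  · rw [Matrix.transpose_mul, Matrix.transpose_mul, Matrix.transpose_transpose, ← hsym,
      Matrix.mul_assoc]
  · rw [Matrix.mul_assoc, Matrix.rank_mul_eq_right_of_isUnit_det Qᵀ (M * Q) hQTd,
      Matrix.rank_mul_eq_left_of_isUnit_det Q M hQd, hrank]

/-- If each `D i = (P i)ᵀ * A i * P i` is congruent to the symmetric matrix `A i`,
then `diag (A 0, ..., A (k-1))` has a symmetric completion of rank `l` iff
`diag (D 0, ..., D (k-1))` does. -/
theorem stmt_4 {K : Type*} [Field K] {k : ℕ} (hk : 0 < k) {n : Fin k → ℕ}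
    (A : ∀ i : Fin k, Matrix (Fin (n i)) (Fin (n i)) K)
    (hsymm : ∀ i, (A i)ᵀ = A i)
    (P : ∀ i : Fin k, Matrix (Fin (n i)) (Fin (n i)) K)
    (hP : ∀ i, IsUnit (P i))
    (D : ∀ i : Fin k, Matrix (Fin (n i)) (Fin (n i)) K)
    (hD : ∀ i, D i = (P i)ᵀ * A i * P i)
    (l : ℕ) :
    (∃ M, IsCompletion A M ∧ M = Mᵀ ∧ M.rank = l) ↔
      (∃ M, IsCompletion D M ∧ M = Mᵀ ∧ M.rank = l) := by
  have hD' : D = fun i => (P i)ᵀ * A i * P i := funext hD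
  constructor
  · intro h
    rw [hD']
    exact aux_key A P hP l h
  · intro h
    have hPinv : ∀ i, IsUnit (P i)⁻¹ := fun i => Matrix.isUnit_nonsing_inv_iff.mpr (hP i)
    have hA : A = fun i => ((P i)⁻¹)ᵀ * D i * (P i)⁻¹ := by
      funext i
      have h1 : P i * (P i)⁻¹ = 1 :=
        Matrix.mul_nonsing_inv _ ((Matrix.isUnit_iff_isUnit_det _).mp (hP i))
      rw [hD i]
      symm
      calc ((P i)⁻¹)ᵀ * ((P i)ᵀ * A i * P i) * (P i)⁻¹
          = (P i * (P i)⁻¹)ᵀ * A i * (P i * (P i)⁻¹) := by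
            rw [Matrix.transpose_mul]; simp only [Matrix.mul_assoc]
        _ = A i := by rw [h1]; simp
    rw [hA]
    exact aux_key D (fun i => (P i)⁻¹) hPinv l h
end

section
/- Let K be a field. Let A_1 be an n_1 × n_1 b-diagonal matrix of rank r_1 and A_2 an n_2 × n_2 b-diagonal matrix of rank r_2 over K, and suppose n_2 − r_2 > n_1. Then the block matrix [[A_1, T^{n_1}_{n_1,n_2}], [T^{n_1}_{n_2,n_1}, A_2]] (a symmetric completion of diag(A_1, A_2)) has rank 2·n_1 + r_2. -/
open Matrix

/-- `Tmat K r m n` is the `m × n` matrix `T^r_{m,n}` (0-indexed) whose entries are `1`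
exactly at the positions `(m-1-p, n-1-p)` for `p = 0, ..., r-1`, and `0` elsewhere. -/
def Tmat (K : Type*) [Zero K] [One K] (r m n : ℕ) : Matrix (Fin m) (Fin n) K :=
  Matrix.of fun i j =>
    if m - 1 - (i : ℕ) = n - 1 - (j : ℕ) ∧ m - 1 - (i : ℕ) < r then 1 else 0

/-- A square matrix is b-diagonal if it is diagonal and its nonzero diagonal entries
occur exactly in the first `r` positions for some `r`. -/
def IsBDiag {K : Type*} [Zero K] {n : ℕ} (A : Matrix (Fin n) (Fin n) K) : Prop :=
  ∃ r : ℕ, (∀ i j : Fin n, i ≠ j → A i j = 0) ∧ (∀ i : Fin n, A i i ≠ 0 ↔ (i : ℕ) < r)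

lemma card_fin_lt' (n k : ℕ) (hk : k ≤ n) : Fintype.card {j : Fin n // (j : ℕ) < k} = k := by
  have e : {j : Fin n // (j : ℕ) < k} ≃ Fin k :=
    { toFun := fun x => ⟨x.1, x.2⟩
      invFun := fun a => ⟨⟨a.1, a.2.trans_le hk⟩, a.2⟩
      left_inv := fun x => rfl
      right_inv := fun a => rfl }
  rw [Fintype.card_congr e, Fintype.card_fin]

lemma card_fin_ge' (n m : ℕ) : Fintype.card {j : Fin n // m ≤ (j : ℕ)} = n - m := by
  have e : {j : Fin n // m ≤ (j : ℕ)} ≃ Fin (n - m) :=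
    { toFun := fun x => ⟨x.1 - m, by have := x.1.isLt; have := x.2; omega⟩
      invFun := fun a => ⟨⟨a.1 + m, by have := a.isLt; omega⟩, by simp⟩
      left_inv := fun x => by ext; have := x.2; simp; omega
      right_inv := fun a => by ext; simp }
  rw [Fintype.card_congr e, Fintype.card_fin]


theorem stmt_8 {K : Type*} [Field K] {n₁ n₂ r₁ r₂ : ℕ}
    (A₁ : Matrix (Fin n₁) (Fin n₁) K) (A₂ : Matrix (Fin n₂) (Fin n₂) K)
    (hA₁ : IsBDiag A₁) (hA₂ : IsBDiag A₂)
    (hr₁ : A₁.rank = r₁) (hr₂ : A₂.rank = r₂)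
    (h : n₁ < n₂ - r₂) :
    (Matrix.fromBlocks A₁ (Tmat K n₁ n₁ n₂) (Tmat K n₁ n₂ n₁) A₂).rank
      = 2 * n₁ + r₂ := by
  classical
  obtain ⟨s₁, hoff₁, _⟩ := hA₁
  obtain ⟨s, hoff, hdiagA₂⟩ := hA₂
  have hA2eq : A₂ = Matrix.diagonal (fun i => A₂ i i) := by
    ext i j
    by_cases hij : i = j
    · subst hij; simp [Matrix.diagonal_apply]
    · simp [Matrix.diagonal_apply, hij, hoff i j hij]
  have hcard : Fintype.card {i : Fin n₂ // A₂ i i ≠ 0} = r₂ := by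
    rw [← Matrix.rank_diagonal (fun i : Fin n₂ => A₂ i i), ← hA2eq, hr₂]
  have hmin : r₂ = min s n₂ := by
    rw [← hcard, Fintype.card_congr (Equiv.subtypeEquivRight
      (q := fun j : Fin n₂ => (j:ℕ) < min s n₂)
      (fun j => by have := j.isLt; rw [hdiagA₂ j]; omega))]
    exact card_fin_lt' _ _ (min_le_right _ _)
  have hr2n : r₂ ≤ n₂ := by omega
  have hdg : ∀ j : Fin n₂, A₂ j j ≠ 0 ↔ (j:ℕ) < r₂ := fun j => by
    have := j.isLt; rw [hdiagA₂ j]; omega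
  have hn12 : n₁ ≤ n₂ := by omega
  have hkey : n₁ + r₂ < n₂ := by omega
  have hT : ∀ (i : Fin n₁) (j : Fin n₂),
      Tmat K n₁ n₁ n₂ i j = if (j:ℕ) = i + (n₂ - n₁) then 1 else 0 := by
    intro i j
    have hi := i.isLt; have hj := j.isLt
    simp only [Tmat, Matrix.of_apply]
    split_ifs <;> first | rfl | omega
  have hT' : ∀ (i : Fin n₂) (j : Fin n₁),
      Tmat K n₁ n₂ n₁ i j = if (i:ℕ) = j + (n₂ - n₁) then 1 else 0 := by
    intro i j
    have hi := i.isLt; have hj := j.isLt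
    simp only [Tmat, Matrix.of_apply]
    split_ifs <;> first | rfl | omega
  set C : Matrix (Fin n₂) (Fin n₁) K :=
    Matrix.of (fun i j => if (i:ℕ) = (j:ℕ) + (n₂ - n₁) then A₁ j j else 0) with hC
  set F : Matrix (Fin n₁ ⊕ Fin n₂) (Fin n₁ ⊕ Fin n₂) K :=
    Matrix.fromBlocks 1 0 C 1 with hF
  set N : Matrix (Fin n₁ ⊕ Fin n₂) (Fin n₁ ⊕ Fin n₂) K :=
    Matrix.fromBlocks 0 (Tmat K n₁ n₁ n₂) (Tmat K n₁ n₂ n₁) A₂ with hN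
  have hFinv : F * Matrix.fromBlocks 1 0 (-C) 1 = 1 := by
    rw [hF, Matrix.fromBlocks_multiply]
    simp [Matrix.fromBlocks_one]
  have hFunit : IsUnit F.det := by
    have : Invertible F := invertibleOfRightInverse _ _ hFinv
    exact (Matrix.isUnit_iff_isUnit_det F).mp (isUnit_of_invertible F)
  have hTC : Tmat K n₁ n₁ n₂ * C = A₁ := by
    ext i j
    have hi := i.isLt; have hj := j.isLt
    rw [Matrix.mul_apply]
    rw [Finset.sum_congr rfl (fun k _ => show Tmat K n₁ n₁ n₂ i k * C k j
        = if k = (⟨(i:ℕ) + (n₂ - n₁), by omega⟩ : Fin n₂) then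
            (if (i:ℕ) = (j:ℕ) then A₁ j j else 0) else 0 from by
      have hk := k.isLt
      rw [hT, hC]
      simp only [Matrix.of_apply, Fin.ext_iff]
      split_ifs <;> first | omega | ring1)]
    rw [Finset.sum_ite_eq' Finset.univ _ (fun _ => if (i:ℕ) = (j:ℕ) then A₁ j j else 0)]
    simp only [Finset.mem_univ, if_true]
    by_cases hij : i = j
    · subst hij; simp
    · rw [if_neg (fun hv => hij (Fin.ext hv)), hoff₁ i j hij]
  have hA2C : A₂ * C = 0 := by
    ext i j
    rw [Matrix.mul_apply]
    apply Finset.sum_eq_zero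
    intro k _
    by_cases hik : i = k
    · subst hik
      rw [hC]
      simp only [Matrix.of_apply]
      by_cases hij : (i:ℕ) = (j:ℕ) + (n₂ - n₁)
      · have hz : A₂ i i = 0 := by
          by_contra hne
          have := (hdg i).mp hne
          have := j.isLt
          omega
        simp [hz, hij]
      · simp [hij]
    · rw [hoff i k hik, zero_mul]
  have hM : Matrix.fromBlocks A₁ (Tmat K n₁ n₁ n₂) (Tmat K n₁ n₂ n₁) A₂ = N * F := by
    rw [hN, hF, Matrix.fromBlocks_multiply]
    simp only [Matrix.zero_mul, Matrix.mul_zero, Matrix.mul_one, Matrix.one_mul,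
      add_zero, zero_add, hTC, hA2C]
  -- the permutation
  let f : (Fin n₁ ⊕ Fin n₂) → (Fin n₁ ⊕ Fin n₂) :=
    Sum.elim (fun j => Sum.inr ⟨(j:ℕ) + (n₂ - n₁), by omega⟩)
      (fun j => if hj : (j:ℕ) < n₂ - n₁ then Sum.inr j
        else Sum.inl ⟨(j:ℕ) - (n₂ - n₁), by omega⟩)
  have hf1 : ∀ a : Fin n₁, f (Sum.inl a) = Sum.inr ⟨(a:ℕ) + (n₂ - n₁), by omega⟩ :=
    fun a => rfl
  have hf2 : ∀ b : Fin n₂, ∀ _hb : (b:ℕ) < n₂ - n₁, f (Sum.inr b) = Sum.inr b := by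
    intro b hb
    show (if hj : (b:ℕ) < n₂ - n₁ then Sum.inr b
        else Sum.inl (⟨(b:ℕ) - (n₂ - n₁), by omega⟩ : Fin n₁)) = Sum.inr b
    rw [dif_pos hb]
  have hf3 : ∀ b : Fin n₂, ∀ hb : ¬ (b:ℕ) < n₂ - n₁,
      f (Sum.inr b) = Sum.inl ⟨(b:ℕ) - (n₂ - n₁), by omega⟩ := by
    intro b hb
    show (if hj : (b:ℕ) < n₂ - n₁ then Sum.inr b
        else Sum.inl (⟨(b:ℕ) - (n₂ - n₁), by omega⟩ : Fin n₁)) = _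
    rw [dif_neg hb]
  have hfinv : Function.Involutive f := by
    rintro (j | j)
    · rw [hf1, hf3 _ (by simp)]
      simp [Fin.ext_iff]
    · by_cases hj : (j:ℕ) < n₂ - n₁
      · rw [hf2 _ hj, hf2 _ hj]
      · rw [hf3 _ hj, hf1]
        congr 1
        ext
        simp
        omega
  let ρ : Equiv.Perm (Fin n₁ ⊕ Fin n₂) := hfinv.toPerm
  have hρ : ∀ x, ρ x = f x := fun x => rfl
  set w : (Fin n₁ ⊕ Fin n₂) → K :=
    Sum.elim (fun _ => 1) (fun j => if (j:ℕ) < n₂ - n₁ then A₂ j j else 1) with hw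
  have hD : N.submatrix ρ (Equiv.refl _) = Matrix.diagonal w := by
    ext x y
    rw [Matrix.submatrix_apply, Equiv.refl_apply, hρ]
    rcases x with a | a
    · rw [hf1]
      rcases y with b | b
      · -- row inr (a+d), col inl b : T' entry vs diagonal at (inl a, inl b)
        rw [hN]
        simp only [Matrix.fromBlocks_apply₂₁]
        rw [hT']
        rcases eq_or_ne a b with rfl | hab
        · rw [Matrix.diagonal_apply_eq, hw]
          simp
        · rw [Matrix.diagonal_apply_ne _ (by simp [hab])]
          have := a.isLt; have := b.isLt
          simp only [ne_eq, Fin.ext_iff] at hab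
          rw [if_neg]
          exact (by omega : ¬((a:ℕ) + (n₂ - n₁) = (b:ℕ) + (n₂ - n₁)))
      · rw [hN]
        simp only [Matrix.fromBlocks_apply₂₂]
        rw [Matrix.diagonal_apply_ne _ (by simp)]
        by_cases hab : ((⟨(a:ℕ) + (n₂ - n₁), by omega⟩ : Fin n₂)) = b
        · rw [hab]
          by_contra hne
          have hlt := (hdg b).mp hne
          have : (b:ℕ) = (a:ℕ) + (n₂ - n₁) := by rw [← hab]
          omega
        · exact hoff _ _ hab
    · by_cases ha : (a:ℕ) < n₂ - n₁
      · rw [hf2 _ ha]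
        rcases y with b | b
        · rw [hN]
          simp only [Matrix.fromBlocks_apply₂₁]
          rw [hT', Matrix.diagonal_apply_ne _ (by simp), if_neg (by have := b.isLt; omega)]
        · rw [hN]
          simp only [Matrix.fromBlocks_apply₂₂]
          rcases eq_or_ne a b with rfl | hab
          · rw [Matrix.diagonal_apply_eq, hw]
            simp [ha]
          · rw [hoff _ _ hab, Matrix.diagonal_apply_ne _ (by simp [hab])]
      · rw [hf3 _ ha]
        rcases y with b | b
        · rw [hN]
          simp only [Matrix.fromBlocks_apply₁₁, Matrix.zero_apply]
          rw [Matrix.diagonal_apply_ne _ (by simp)]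
        · rw [hN]
          simp only [Matrix.fromBlocks_apply₁₂]
          rw [hT]
          rcases eq_or_ne a b with rfl | hab
          · rw [Matrix.diagonal_apply_eq, hw]
            have := a.isLt
            rw [if_pos (show (a:ℕ) = (a:ℕ) - (n₂ - n₁) + (n₂ - n₁) by omega)]
            simp [ha]
          · rw [Matrix.diagonal_apply_ne _ (by simp [hab])]
            have := a.isLt; have := b.isLt
            simp only [ne_eq, Fin.ext_iff] at hab
            rw [if_neg]
            exact (by omega : ¬((b:ℕ) = (a:ℕ) - (n₂ - n₁) + (n₂ - n₁)))
  rw [hM, Matrix.rank_mul_eq_left_of_isUnit_det F N hFunit,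
    ← Matrix.rank_submatrix N ρ (Equiv.refl _), hD, Matrix.rank_diagonal]
  rw [Fintype.card_congr (Equiv.subtypeSum (p := fun x => w x ≠ 0)), Fintype.card_sum]
  have h1 : Fintype.card {a : Fin n₁ // w (Sum.inl a) ≠ 0} = n₁ := by
    rw [Fintype.card_congr (Equiv.subtypeUnivEquiv (fun a => by rw [hw]; simp)),
      Fintype.card_fin]
  have h2 : Fintype.card {b : Fin n₂ // w (Sum.inr b) ≠ 0} = r₂ + n₁ := by
    rw [Fintype.card_congr (Equiv.subtypeEquivRight
      (q := fun b : Fin n₂ => (b:ℕ) < r₂ ∨ n₂ - n₁ ≤ (b:ℕ)) (fun b => by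
        rw [hw]
        simp only [Sum.elim_inr]
        by_cases hb : (b:ℕ) < n₂ - n₁
        · rw [if_pos hb, hdg b]; omega
        · rw [if_neg hb]; simp; omega))]
    rw [Fintype.card_subtype_or_disjoint _ _ (by
      intro p hp hq x hx
      have h1 := hp x hx
      have h2 := hq x hx
      omega)]
    rw [card_fin_lt' _ _ hr2n, card_fin_ge']
    omega
  rw [h1, h2]
  omega
end

section
/- Let K be a field of characteristic different from 2 and let A be an antisymmetric n × n matrix over K (i.e. Aᵀ = −A) of rank r. Then r is even and there exists an invertible n × n matrix P over K such that Pᵀ A P = R^r_n. -/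
/-!
An antisymmetric matrix `A` over a field of characteristic `≠ 2` is the Gram matrix of the
alternating form `B = toBilin' A` on `Kⁿ`, and congruence `Pᵀ A P` is a change of basis for `B`.
If `B ≠ 0`, pick `x, y` with `B x y = 1`. The plane they span has Gram matrix `[[0,1],[-1,0]]`, so
it is nondegenerate and `V` is its direct sum with its orthogonal complement; induction on the
dimension of that complement gives a basis in which the Gram matrix is `R^r_n`. Congruence
preserves rank and `R^r_n` has rank `r`, so `r = rank A`, and `r` is even by construction.
-/

open Matrix

/-- `Rmat K r n` is the `n × n` matrix `R^r_n` (0-indexed): block diagonal with `r/2`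
diagonal blocks equal to `[[0,1],[-1,0]]` followed by zeros. -/
def Rmat (K : Type*) [Zero K] [One K] [Neg K] (r n : ℕ) : Matrix (Fin n) (Fin n) K :=
  Matrix.of fun i j =>
    if (i : ℕ) % 2 = 0 ∧ (j : ℕ) = (i : ℕ) + 1 ∧ (j : ℕ) < r then 1
    else if (j : ℕ) % 2 = 0 ∧ (i : ℕ) = (j : ℕ) + 1 ∧ (i : ℕ) < r then -1
    else 0

section Rmat

variable {K : Type*}

@[simp]
lemma Rmat_zero [Zero K] [One K] [Neg K] (n : ℕ) : Rmat K 0 n = 0 := by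
  ext i j
  simp [Rmat]

lemma Rmat_two_add [Zero K] [One K] [Neg K] (r m : ℕ) :
    Rmat K (2 + r) (2 + m) =
      (fromBlocks (Rmat K 2 2) 0 0 (Rmat K r m)).submatrix finSumFinEquiv.symm
        finSumFinEquiv.symm := by
  ext i j
  obtain ⟨p, rfl⟩ := finSumFinEquiv.surjective i
  obtain ⟨q, rfl⟩ := finSumFinEquiv.surjective j
  rcases p with k | k <;> rcases q with l | l <;>
    simp only [submatrix_apply, Equiv.symm_apply_apply, fromBlocks_apply₁₁,
      fromBlocks_apply₁₂, fromBlocks_apply₂₁, fromBlocks_apply₂₂, Matrix.zero_apply] <;>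
    simp only [Rmat, of_apply, finSumFinEquiv_apply_left, finSumFinEquiv_apply_right,
      Fin.val_castAdd, Fin.val_natAdd] <;>
    split_ifs <;> first | rfl | omega

variable [Ring K] {r n : ℕ}

lemma Rmat_transpose_mul_self (hr : Even r) (hrn : r ≤ n) :
    (Rmat K r n)ᵀ * Rmat K r n = diagonal fun i : Fin n => if (i : ℕ) < r then 1 else 0 := by
  have hr2 : r % 2 = 0 := Nat.even_iff.mp hr
  ext i j
  rw [mul_apply, diagonal_apply]
  by_cases hi : (i : ℕ) < r
  · -- the only nonzero entry in column `i` sits in row `i xor 1`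
    rw [Fintype.sum_eq_single ⟨i + 1 - 2 * (i % 2), by omega⟩ fun k hk => by
      simp only [Rmat, transpose_apply, of_apply, ne_eq, Fin.ext_iff] at hk ⊢
      split_ifs <;> first | omega | simp]
    simp only [Rmat, transpose_apply, of_apply, Fin.ext_iff]
    split_ifs <;> first | omega | simp
  · rw [Fintype.sum_eq_zero _ fun k => by
      simp only [Rmat, transpose_apply, of_apply]
      split_ifs <;> first | omega | simp]
    simp [hi]

lemma Rmat_mul_diagonal :
    Rmat K r n * diagonal (fun i : Fin n => if (i : ℕ) < r then 1 else 0) = Rmat K r n := by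
  ext i j
  rw [mul_diagonal]
  split_ifs with hj
  · rw [mul_one]
  · simp only [Rmat, of_apply, mul_zero]
    split_ifs <;> first | rfl | omega

end Rmat

lemma rank_Rmat {K : Type*} [Field K] {r n : ℕ} (hr : Even r) (hrn : r ≤ n) :
    (Rmat K r n).rank = r := by
  classical
  set D : Matrix (Fin n) (Fin n) K := diagonal fun i => if (i : ℕ) < r then 1 else 0
  have hD : D.rank = r := by
    simp only [D, rank_diagonal, ne_eq, ite_eq_right_iff, one_ne_zero, imp_false, not_not]
    exact Fintype.card_fin_lt_of_le hrn
  apply le_antisymm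
  · calc (Rmat K r n).rank = (Rmat K r n * D).rank := by rw [Rmat_mul_diagonal]
      _ ≤ r := hD ▸ rank_mul_le_right _ _
  · calc r = ((Rmat K r n)ᵀ * Rmat K r n).rank := by rw [Rmat_transpose_mul_self hr hrn, hD]
      _ ≤ (Rmat K r n).rank := rank_mul_le_right _ _

namespace LinearMap.BilinForm

open Module Submodule

variable {K V : Type*} [Field K] [AddCommGroup V] [Module K V] {B : LinearMap.BilinForm K V}

lemma exists_apply_eq_one_of_ne_zero (hB : B ≠ 0) : ∃ x y, B x y = 1 := by
  obtain ⟨x, y, hxy⟩ : ∃ x y, B x y ≠ 0 := by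
    by_contra! h
    exact hB (ext h)
  exact ⟨x, (B x y)⁻¹ • y, by rw [map_smul, smul_eq_mul, inv_mul_cancel₀ hxy]⟩

lemma IsAlt.linearIndependent_of_apply_eq_one (hB : B.IsAlt) {x y : V} (h : B x y = 1) :
    LinearIndependent K ![x, y] := by
  have hyx : B y x = -1 := by rw [← hB.neg_eq, h]
  refine LinearIndependent.pair_iff.2 fun s t hst => ?_
  have hs : s = 0 := by simpa [h, hB.self_eq_zero] using congrArg (B · y) hst
  have ht : t = 0 := by simpa [hyx, hB.self_eq_zero, hs] using congrArg (B · x) hst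
  exact ⟨hs, ht⟩

lemma IsAlt.toMatrix_restrict_span_pair (hB : B.IsAlt) {x y : V} (h : B x y = 1) :
    toMatrix (Basis.span (hB.linearIndependent_of_apply_eq_one h))
      (B.restrict (span K (Set.range ![x, y]))) = Rmat K 2 2 := by
  have hyx : B y x = -1 := by rw [← hB.neg_eq, h]
  ext i j
  fin_cases i <;> fin_cases j <;> simp [Basis.span_apply, Rmat, h, hyx, hB.self_eq_zero]

lemma toMatrix_prod_map_prodEquivOfIsCompl {ι κ : Type*} [Fintype ι] [Fintype κ]
    [DecidableEq ι] [DecidableEq κ] (hB : B.IsRefl) {W : Submodule K V} (hW : IsCompl W (B.orthogonal W))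
    (b : Basis ι K W) (c : Basis κ K (B.orthogonal W)) :
    toMatrix ((b.prod c).map (prodEquivOfIsCompl _ _ hW)) B =
      fromBlocks (toMatrix b (B.restrict W)) 0 0 (toMatrix c (B.restrict (B.orthogonal W))) := by
  ext (i | i) (j | j)
  · simp [coe_prodEquivOfIsCompl']
  · simpa [coe_prodEquivOfIsCompl'] using (c j).2 _ (b i).2
  · simpa [coe_prodEquivOfIsCompl'] using hB _ _ ((c i).2 _ (b j).2)
  · simp [coe_prodEquivOfIsCompl']

lemma toMatrix_reindex {ι κ : Type*} [Fintype ι] [Fintype κ] [DecidableEq ι] [DecidableEq κ]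
    (b : Basis ι K V) (e : ι ≃ κ) :
    toMatrix (b.reindex e) B = (toMatrix b B).submatrix e.symm e.symm := by
  ext i j
  simp

theorem IsAlt.exists_basis_toMatrix_eq_Rmat [FiniteDimensional K V] (hB : B.IsAlt) {n : ℕ}
    (hn : finrank K V = n) :
    ∃ r, Even r ∧ r ≤ n ∧ ∃ b : Basis (Fin n) K V, toMatrix b B = Rmat K r n := by
  induction n using Nat.strong_induction_on generalizing V with
  | _ n ih =>
  by_cases hB0 : B = 0
  · exact ⟨0, Even.zero, n.zero_le, finBasisOfFinrankEq K V hn, by simp [hB0]⟩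
  obtain ⟨x, y, h⟩ := exists_apply_eq_one_of_ne_zero hB0
  have hxy := hB.linearIndependent_of_apply_eq_one h
  set W := span K (Set.range ![x, y])
  have hW : IsCompl W (B.orthogonal W) :=
    isCompl_orthogonal_of_restrict_nondegenerate hB.isRefl <|
      (nondegenerate_iff_det_ne_zero (Basis.span hxy)).2 <| by
        rw [hB.toMatrix_restrict_span_pair h]
        simp [det_fin_two, Rmat]
  obtain ⟨m, hm, rfl⟩ : ∃ m, finrank K (B.orthogonal W) = m ∧ n = 2 + m := by
    have := finrank_add_eq_of_isCompl hW
    rw [finrank_span_eq_card hxy, Fintype.card_fin] at this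
    exact ⟨_, rfl, by omega⟩
  obtain ⟨r, hr, hrm, c, hc⟩ := ih m (by omega) (B := B.restrict _) (fun z => hB z) hm
  refine ⟨2 + r, even_two.add hr, by omega,
    (((Basis.span hxy).prod c).map (prodEquivOfIsCompl _ _ hW)).reindex finSumFinEquiv, ?_⟩
  rw [toMatrix_reindex, toMatrix_prod_map_prodEquivOfIsCompl hB.isRefl,
    hB.toMatrix_restrict_span_pair h, hc, Rmat_two_add]

end LinearMap.BilinForm

namespace Matrix

variable {ι K : Type*} [Fintype ι] [DecidableEq ι]

lemma rank_transpose_mul_mul_of_isUnit [CommRing K] {P : Matrix ι ι K} (hP : IsUnit P)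
    (A : Matrix ι ι K) : (Pᵀ * A * P).rank = A.rank := by
  have hdet : IsUnit P.det := (isUnit_iff_isUnit_det P).1 hP
  rw [rank_mul_eq_left_of_isUnit_det _ _ hdet,
    rank_mul_eq_right_of_isUnit_det _ _ (by rwa [det_transpose])]

lemma isAlt_toBilin' [Field K] (hchar : ringChar K ≠ 2) {A : Matrix ι ι K} (hA : Aᵀ = -A) :
    (toBilin' A).IsAlt := fun x => by
  have hneg : toBilin' A x x = -toBilin' A x x := by
    rw [toBilin'_apply', ← dotProduct_neg, ← neg_mulVec, ← hA, mulVec_transpose,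
      dotProduct_mulVec, dotProduct_comm]
  have h2 : (2 : K) * toBilin' A x x = 0 := by linear_combination hneg
  exact (mul_eq_zero.1 h2).resolve_left (Ring.two_ne_zero hchar)

end Matrix

/-- Over a field of characteristic `≠ 2`, an antisymmetric matrix has even rank `r`
and is congruent to `R^r_n`. -/
theorem stmt_9 {K : Type*} [Field K] (hchar : ringChar K ≠ 2) {n : ℕ}
    (A : Matrix (Fin n) (Fin n) K) (hA : Aᵀ = -A) :
    Even A.rank ∧
      ∃ P : Matrix (Fin n) (Fin n) K, IsUnit P ∧ Pᵀ * A * P = Rmat K A.rank n := by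
  obtain ⟨r, hr, hrn, b, hb⟩ :=
    (isAlt_toBilin' hchar hA).exists_basis_toMatrix_eq_Rmat (Module.finrank_fin_fun K)
  set P := (Pi.basisFun K (Fin n)).toMatrix b
  have hP : IsUnit P := by
    have := (Pi.basisFun K (Fin n)).invertibleToMatrix b
    exact isUnit_of_invertible P
  have hPAP : Pᵀ * A * P = Rmat K r n := by
    rw [← hb, ← LinearMap.BilinForm.toMatrix_mul_basis_toMatrix (Pi.basisFun K (Fin n)),
      LinearMap.BilinForm.toMatrix_basisFun, LinearMap.BilinForm.toMatrix'_toBilin']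
  have hrank : A.rank = r := by
    rw [← rank_Rmat (K := K) hr hrn, ← hPAP, rank_transpose_mul_mul_of_isUnit hP]
  exact hrank ▸ ⟨hr, P, hP, hPAP⟩
end

section
/- Let K be a field of characteristic different from 2, k ≥ 1, and let A_1, ..., A_k be antisymmetric square matrices over K (A_iᵀ = −A_i) with A_i of size n_i × n_i, and set r_i = rank(A_i) (each r_i is even). Then for every natural number l, there exists an antisymmetric completion of rank l of the block diagonal partial matrix diag(A_1, ..., A_k) if and only if there exists an antisymmetric completion of rank l of the block diagonal partial matrix diag(R^{r_1}_{n_1}, ..., R^{r_k}_{n_k}). -/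
/-!
Over a field with `2 ≠ 0`, every antisymmetric matrix `A` is congruent (`A ↦ Pᵀ * A * P` with
`P` invertible) to `R^r_n` with `r = rank A`: a nonzero entry is moved to position `(0, 1)` by a
permutation and scaled to `1`, the resulting `2 × 2` block `!![0, 1; -1, 0]` splits off by block
elimination, and one recurses on the complementary block.

Congruences `P i` of the diagonal blocks assemble to the congruence by `blockDiagonal' P` of the
whole matrix, which preserves antisymmetry, rank and the diagonal-block pattern of a completion.
Since congruence is symmetric, completions of `diag (A i)` and of `diag (R^{r i}_{n i})` of a given
rank correspond to each other.
-/

open Matrix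

theorem Equiv.Perm.exists_apply_eq_and_apply_eq {α : Type*} [DecidableEq α] {a b i j : α}
    (hab : a ≠ b) (hij : i ≠ j) : ∃ σ : Equiv.Perm α, σ a = i ∧ σ b = j := by
  refine ⟨Equiv.swap a i * Equiv.swap b (Equiv.swap a i j), ?_, ?_⟩
  · have : a ≠ Equiv.swap a i j := by
      intro h
      exact hij (by simpa using (Equiv.swap_apply_eq_iff.mp h.symm).symm)
    simp [Equiv.swap_apply_of_ne_of_ne hab this]
  · simp

namespace Matrix

section Congruence

variable {K : Type*} [Field K] {m n : Type*} [Fintype m] [DecidableEq m] [Fintype n]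
  [DecidableEq n]

def IsCongruent (A B : Matrix m m K) : Prop :=
  ∃ P : Matrix m m K, IsUnit P ∧ Pᵀ * A * P = B

namespace IsCongruent

variable {A B C : Matrix m m K}

@[refl]
theorem refl (A : Matrix m m K) : IsCongruent A A := ⟨1, isUnit_one, by simp⟩

theorem trans (hAB : IsCongruent A B) (hBC : IsCongruent B C) : IsCongruent A C := by
  obtain ⟨P, hP, rfl⟩ := hAB
  obtain ⟨Q, hQ, rfl⟩ := hBC
  exact ⟨P * Q, hP.mul hQ, by simp only [transpose_mul, Matrix.mul_assoc]⟩

theorem symm (h : IsCongruent A B) : IsCongruent B A := by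
  obtain ⟨P, hP, rfl⟩ := h
  obtain ⟨u, rfl⟩ := hP
  refine ⟨↑u⁻¹, u⁻¹.isUnit, ?_⟩
  calc (↑u⁻¹ : Matrix m m K)ᵀ * ((↑u : Matrix m m K)ᵀ * A * ↑u) * ↑u⁻¹
      = (↑u * ↑u⁻¹ : Matrix m m K)ᵀ * A * (↑u * ↑u⁻¹) := by
        simp only [transpose_mul, Matrix.mul_assoc]
    _ = A := by simp

theorem transpose_eq_neg (h : IsCongruent A B) (hA : Aᵀ = -A) : Bᵀ = -B := by
  obtain ⟨P, -, rfl⟩ := h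
  simp [transpose_mul, hA, Matrix.mul_assoc]

theorem rank_eq (h : IsCongruent A B) : A.rank = B.rank := by
  obtain ⟨P, hP, rfl⟩ := h
  rw [rank_mul_eq_left_of_isUnit_det _ _ ((isUnit_iff_isUnit_det P).mp hP),
    rank_mul_eq_right_of_isUnit_det _ _
      ((isUnit_iff_isUnit_det _).mp ((isUnit_transpose P).mpr hP))]

theorem submatrix (e : n ≃ m) (h : IsCongruent A B) :
    IsCongruent (A.submatrix e e) (B.submatrix e e) := by
  obtain ⟨P, hP, rfl⟩ := h
  refine ⟨P.submatrix e e, hP.map (reindexAlgEquiv K K e.symm), ?_⟩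
  rw [transpose_submatrix, submatrix_mul_equiv, submatrix_mul_equiv]

theorem fromBlocks {A A' : Matrix m m K} {D D' : Matrix n n K} (hA : IsCongruent A A')
    (hD : IsCongruent D D') :
    IsCongruent (Matrix.fromBlocks A 0 0 D) (Matrix.fromBlocks A' 0 0 D') := by
  obtain ⟨P, hP, rfl⟩ := hA
  obtain ⟨Q, hQ, rfl⟩ := hD
  refine ⟨Matrix.fromBlocks P 0 0 Q, isUnit_fromBlocks_zero₂₁.mpr ⟨hP, hQ⟩, ?_⟩
  simp [fromBlocks_transpose, fromBlocks_multiply]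

end IsCongruent

theorem isCongruent_submatrix_iff (e : n ≃ m) {A B : Matrix m m K} :
    IsCongruent (A.submatrix e e) (B.submatrix e e) ↔ IsCongruent A B := by
  refine ⟨fun h => ?_, IsCongruent.submatrix e⟩
  simpa using h.submatrix e.symm

theorem isCongruent_submatrix_perm (A : Matrix m m K) (σ : Equiv.Perm m) :
    IsCongruent A (A.submatrix σ σ) := by
  refine ⟨σ⁻¹.permMatrix K,
    by simpa using (Group.isUnit σ).map (permMatrixHom (R := K)), ?_⟩
  rw [transpose_permMatrix, inv_inv, PEquiv.toMatrix_toPEquiv_mul, PEquiv.mul_toMatrix_toPEquiv]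
  rfl

end Congruence

theorem rank_fromBlocks_zero_zero {K : Type*} [Field K] {l m n p : Type*} [Fintype l]
    [Fintype m] [Fintype n] [Fintype p] (A : Matrix l n K) (D : Matrix m p K) :
    (fromBlocks A 0 0 D).rank = A.rank + D.rank := by
  have hmul : (fromBlocks A 0 0 D).mulVecLin =
      (LinearEquiv.sumArrowLequivProdArrow l m K K).symm ∘ₗ
        (A.mulVecLin.prodMap D.mulVecLin) ∘ₗ
          (LinearEquiv.sumArrowLequivProdArrow n p K K).toLinearMap := by
    ext x i
    rcases i with i | i <;> simp [fromBlocks_mulVec] <;> rfl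
  have hprod : Module.finrank K ((LinearMap.range A.mulVecLin).prod (LinearMap.range D.mulVecLin))
      = A.rank + D.rank := by
    have hinj : Function.Injective ((LinearMap.range A.mulVecLin).subtype.prodMap
        (LinearMap.range D.mulVecLin).subtype) :=
      Prod.map_injective.mpr ⟨Subtype.val_injective, Subtype.val_injective⟩
    rw [Matrix.rank, Matrix.rank, ← Module.finrank_prod, ← LinearMap.finrank_range_of_inj hinj,
      LinearMap.range_prodMap, Submodule.range_subtype, Submodule.range_subtype]
  rw [Matrix.rank, hmul, LinearMap.range_comp,
    LinearMap.range_comp_of_range_eq_top _ (LinearEquiv.range _), LinearEquiv.finrank_map_eq,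
    LinearMap.range_prodMap, hprod]

section Antisymmetric

variable {K : Type*} [Field K] {l m : Type*}

theorem apply_self_eq_zero_of_transpose_eq_neg (h2 : (2 : K) ≠ 0) {A : Matrix m m K}
    (hA : Aᵀ = -A) (i : m) : A i i = 0 := by
  have h : A i i = -A i i := congrFun (congrFun hA i) i
  have h2A : (2 : K) * A i i = 0 := by linear_combination h
  exact (mul_eq_zero.mp h2A).resolve_left h2

theorem exists_ne_apply_ne_zero_of_transpose_eq_neg (h2 : (2 : K) ≠ 0) {A : Matrix m m K}
    (hA : Aᵀ = -A) (hA0 : A ≠ 0) : ∃ i j, i ≠ j ∧ A i j ≠ 0 := by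
  obtain ⟨i, j, hij⟩ : ∃ i j, A i j ≠ 0 := by
    by_contra! h
    exact hA0 (Matrix.ext h)
  exact ⟨i, j, fun h => hij (h ▸ apply_self_eq_zero_of_transpose_eq_neg h2 hA i), hij⟩

variable [Fintype l] [DecidableEq l] [Fintype m] [DecidableEq m]

theorem isCongruent_fin_two {a : K} (ha : a ≠ 0) :
    IsCongruent !![0, a; -a, 0] !![0, 1; -1, 0] := by
  refine ⟨!![1, 0; 0, a⁻¹], ?_, ?_⟩
  · rw [isUnit_iff_isUnit_det, det_fin_two_of]
    simp [ha]
  · ext i j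
    fin_cases i <;> fin_cases j <;> simp [Matrix.mul_apply, Fin.sum_univ_two, ha]

theorem exists_isCongruent_fromBlocks_zero {E : Matrix l l K} {B : Matrix l m K}
    {C : Matrix m l K} {D : Matrix m m K} (hM : (fromBlocks E B C D)ᵀ = -fromBlocks E B C D)
    (hE : IsUnit E) : ∃ D', IsCongruent (fromBlocks E B C D) (fromBlocks E 0 0 D') := by
  -- `X` clears the upper right block; antisymmetry then clears the lower left one.
  set X : Matrix (l ⊕ m) (l ⊕ m) K := fromBlocks 1 (-(E⁻¹ * B)) 0 1
  have hX : IsCongruent (fromBlocks E B C D) (Xᵀ * fromBlocks E B C D * X) :=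
    ⟨X, isUnit_fromBlocks_zero₂₁.mpr ⟨isUnit_one, isUnit_one⟩, rfl⟩
  set R := Xᵀ * fromBlocks E B C D * X
  have hR₁₁ : R.toBlocks₁₁ = E := by
    simp [R, X, fromBlocks_transpose, fromBlocks_multiply]
  have hR₁₂ : R.toBlocks₁₂ = 0 := by
    simp [R, X, fromBlocks_transpose, fromBlocks_multiply, ← Matrix.mul_assoc,
      mul_nonsing_inv _ ((isUnit_iff_isUnit_det _).mp hE)]
  have hR := hX.transpose_eq_neg hM
  rw [← fromBlocks_toBlocks R, fromBlocks_transpose, fromBlocks_neg, fromBlocks_inj] at hR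
  have hR₂₁ : R.toBlocks₂₁ = 0 := by
    rw [← neg_eq_zero, ← hR.2.2.1, hR₁₂, transpose_zero]
  have hRblocks : fromBlocks E 0 0 R.toBlocks₂₂ = R := by
    rw [← hR₁₁, ← hR₁₂, ← hR₂₁, fromBlocks_toBlocks]
  exact ⟨R.toBlocks₂₂, hRblocks ▸ hX⟩

theorem exists_isCongruent_fromBlocks_fin_two (h2 : (2 : K) ≠ 0)
    (A : Matrix (Fin 2 ⊕ m) (Fin 2 ⊕ m) K) (hA : Aᵀ = -A) (hA0 : A ≠ 0) :
    ∃ D, IsCongruent A (fromBlocks !![0, 1; -1, 0] 0 0 D) := by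
  obtain ⟨i, j, hij, ha⟩ := exists_ne_apply_ne_zero_of_transpose_eq_neg h2 hA hA0
  obtain ⟨σ, hσi, hσj⟩ :=
    Equiv.Perm.exists_apply_eq_and_apply_eq (Sum.inl_injective.ne zero_ne_one) hij
  set B := A.submatrix σ σ
  have hAB : IsCongruent A B := isCongruent_submatrix_perm A σ
  have hB : Bᵀ = -B := hAB.transpose_eq_neg hA
  have hB₁₁ : B.toBlocks₁₁ = !![0, A i j; -A i j, 0] := by
    have hji : A j i = -A i j := congrFun (congrFun hA i) j
    ext a b
    fin_cases a <;> fin_cases b <;>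
      simp [B, toBlocks₁₁, hσi, hσj, hji, apply_self_eq_zero_of_transpose_eq_neg h2 hA]
  have hE : IsUnit B.toBlocks₁₁ := by
    rw [hB₁₁, isUnit_iff_isUnit_det, det_fin_two_of]
    simp [ha]
  rw [← fromBlocks_toBlocks B] at hB hAB
  obtain ⟨D, hD⟩ := exists_isCongruent_fromBlocks_zero hB hE
  rw [hB₁₁] at hD hAB
  exact ⟨D, hAB.trans (hD.trans ((isCongruent_fin_two ha).fromBlocks (.refl D)))⟩

end Antisymmetric

section BlockDiagonal

variable {K : Type*} [Field K] {o : Type*} [Fintype o] [DecidableEq o] {m' : o → Type*}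
  [∀ i, Fintype (m' i)] {β γ : Type*}

theorem submatrix_mk_blockDiagonal'_mul (P : ∀ i, Matrix (m' i) (m' i) K)
    (M : Matrix (Σ i, m' i) β K) (i : o) (c : γ → β) :
    (blockDiagonal' P * M).submatrix (Sigma.mk i) c = P i * M.submatrix (Sigma.mk i) c := by
  ext x y
  simp only [submatrix_apply, mul_apply, Fintype.sum_sigma]
  rw [Finset.sum_eq_single i (fun s _ hs => by simp [blockDiagonal'_apply_ne _ _ _ hs.symm])
    (by simp)]
  simp [blockDiagonal'_apply_eq]

theorem submatrix_mul_blockDiagonal'_mk (M : Matrix β (Σ i, m' i) K)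
    (Q : ∀ i, Matrix (m' i) (m' i) K) (r : γ → β) (j : o) :
    (M * blockDiagonal' Q).submatrix r (Sigma.mk j) = M.submatrix r (Sigma.mk j) * Q j := by
  ext x y
  simp only [submatrix_apply, mul_apply, Fintype.sum_sigma]
  rw [Finset.sum_eq_single j (fun s _ hs => by simp [blockDiagonal'_apply_ne _ _ _ hs])
    (by simp)]
  simp [blockDiagonal'_apply_eq]

end BlockDiagonal

end Matrix

section

variable {K : Type*} [Field K]

theorem Rmat_zero_left (n : ℕ) : Rmat K 0 n = 0 := by
  ext i j
  simp [Rmat]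

theorem submatrix_finSumFinEquiv_Rmat_add_two (r m : ℕ) :
    (Rmat K (r + 2) (2 + m)).submatrix finSumFinEquiv finSumFinEquiv =
      fromBlocks !![0, 1; -1, 0] 0 0 (Rmat K r m) := by
  ext (a | a) (b | b)
  · fin_cases a <;> fin_cases b <;> simp [Rmat]
  all_goals
    simp only [Rmat, submatrix_apply, finSumFinEquiv_apply_left, finSumFinEquiv_apply_right,
      fromBlocks_apply₁₂, fromBlocks_apply₂₁, fromBlocks_apply₂₂, of_apply,
      Fin.val_natAdd, Fin.val_castAdd, Matrix.zero_apply]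
    have := a.isLt
    split_ifs <;> first | rfl | omega

theorem isCongruent_Rmat_rank (h2 : (2 : K) ≠ 0) {n : ℕ} (A : Matrix (Fin n) (Fin n) K)
    (hA : Aᵀ = -A) : IsCongruent A (Rmat K A.rank n) := by
  induction n using Nat.strong_induction_on with
  | _ n ih =>
    by_cases hA0 : A = 0
    · subst hA0
      rw [rank_zero, Rmat_zero_left]
    obtain ⟨i, j, hij, -⟩ := exists_ne_apply_ne_zero_of_transpose_eq_neg h2 hA hA0
    obtain ⟨m, rfl⟩ : ∃ m, n = 2 + m := ⟨n - 2, by have := Fin.val_ne_of_ne hij; omega⟩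
    set e : Fin 2 ⊕ Fin m ≃ Fin (2 + m) := finSumFinEquiv
    have hAe : (A.submatrix e e)ᵀ = -A.submatrix e e := by
      rw [transpose_submatrix, hA]
      rfl
    obtain ⟨D, hD⟩ := exists_isCongruent_fromBlocks_fin_two h2 (A.submatrix e e) hAe
      (fun h => hA0 (by simpa using congrArg (·.submatrix e.symm e.symm) h))
    have hD' : Dᵀ = -D := by
      have h := hD.transpose_eq_neg hAe
      rw [fromBlocks_transpose, fromBlocks_neg, fromBlocks_inj] at h
      exact h.2.2.2
    have hJ : (!![0, 1; -1, 0] : Matrix (Fin 2) (Fin 2) K).rank = 2 := by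
      rw [rank_of_isUnit, Fintype.card_fin]
      rw [isUnit_iff_isUnit_det, det_fin_two_of]
      simp
    have hrank : A.rank = D.rank + 2 := by
      rw [← rank_submatrix A e e, hD.rank_eq, rank_fromBlocks_zero_zero, hJ, add_comm]
    rw [← isCongruent_submatrix_iff e, hrank, submatrix_finSumFinEquiv_Rmat_add_two]
    exact hD.trans (.fromBlocks (.refl _) (ih m (by omega) D hD'))

theorem exists_completion_of_isCongruent {k : ℕ} {n : Fin k → ℕ}
    {A B : ∀ i : Fin k, Matrix (Fin (n i)) (Fin (n i)) K} (hAB : ∀ i, IsCongruent (A i) (B i))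
    {l : ℕ} (h : ∃ M, IsCompletion A M ∧ Mᵀ = -M ∧ M.rank = l) :
    ∃ M, IsCompletion B M ∧ Mᵀ = -M ∧ M.rank = l := by
  obtain ⟨M, hM, hMt, rfl⟩ := h
  choose P hP hPAB using hAB
  have hM' : IsCongruent M ((blockDiagonal' P)ᵀ * M * blockDiagonal' P) :=
    ⟨_, (Pi.isUnit_iff.mpr hP).map (blockDiagonal'RingHom _ K), rfl⟩
  refine ⟨_, fun i x y => ?_, hM'.transpose_eq_neg hMt, hM'.rank_eq.symm⟩
  have hblock : M.submatrix (Sigma.mk i) (Sigma.mk i) = A i := Matrix.ext (hM i)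
  change ((blockDiagonal' P)ᵀ * M * blockDiagonal' P).submatrix (Sigma.mk i) (Sigma.mk i) x y =
    B i x y
  rw [blockDiagonal'_transpose, submatrix_mul_blockDiagonal'_mk,
    submatrix_mk_blockDiagonal'_mul, hblock, hPAB]

end

theorem stmt_10_general {K : Type*} [Field K] (hchar : ringChar K ≠ 2)
    {k : ℕ} {n : Fin k → ℕ}
    (A : ∀ i : Fin k, Matrix (Fin (n i)) (Fin (n i)) K)
    (hanti : ∀ i, (A i)ᵀ = -(A i))
    (l : ℕ) :
    (∃ M, IsCompletion A M ∧ Mᵀ = -M ∧ M.rank = l) ↔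
      (∃ M, IsCompletion (fun i => Rmat K ((A i).rank) (n i)) M ∧ Mᵀ = -M ∧
        M.rank = l) := by
  have hR : ∀ i, IsCongruent (A i) (Rmat K (A i).rank (n i)) :=
    fun i => isCongruent_Rmat_rank (Ring.two_ne_zero hchar) (A i) (hanti i)
  exact ⟨exists_completion_of_isCongruent hR,
    exists_completion_of_isCongruent fun i => (hR i).symm⟩

/-- `diag (A 0, ..., A (k-1))` has an antisymmetric completion of rank `l` iff
`diag (R^{r 0}_{n 0}, ..., R^{r (k-1)}_{n (k-1)})` does, where `r i = rank (A i)`. -/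
theorem stmt_10 {K : Type*} [Field K] (hchar : ringChar K ≠ 2)
    {k : ℕ} (hk : 0 < k) {n : Fin k → ℕ}
    (A : ∀ i : Fin k, Matrix (Fin (n i)) (Fin (n i)) K)
    (hanti : ∀ i, (A i)ᵀ = -(A i))
    (l : ℕ) :
    (∃ M, IsCompletion A M ∧ Mᵀ = -M ∧ M.rank = l) ↔
      (∃ M, IsCompletion (fun i => Rmat K ((A i).rank) (n i)) M ∧ Mᵀ = -M ∧
        M.rank = l) :=
  stmt_10_general hchar A hanti l
end

section
/- Let K be a field of characteristic different from 2, k ≥ 1, and let A_1, ..., A_k be antisymmetric square matrices over K (A_iᵀ = −A_i) with A_i of size n_i × n_i (each n_i ≥ 1), where n_1 ≤ n_2 ≤ ... ≤ n_k, and set r_k = rank(A_k). Then every antisymmetric completion M of the block diagonal partial matrix diag(A_1, ..., A_k) satisfies rank(M) ≤ min{ ⟨n_1 + ... + n_k⟩ , 2(n_1 + ... + n_{k-1}) + r_k }. -/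
open Matrix

/-- The even part `⟨m⟩` of a natural number `m`: `m` if `m` is even, `m - 1` otherwise. -/
def evenPart (m : ℕ) : ℕ := if Even m then m else m - 1

/-- The rank of a matrix is at most the sum of the ranks of the two row-submatrices
given by splitting the rows along a predicate `p`. -/
lemma rank_le_rank_rows_add_rank_rows {K : Type*} [Field K] {m o : Type*}
    [Fintype m] [Fintype o] (M : Matrix m o K) (p : m → Prop) [DecidablePred p] :
    M.rank ≤ (M.submatrix ((↑) : {a // p a} → m) id).rank
      + (M.submatrix ((↑) : {a // ¬ p a} → m) id).rank := by
  classical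
  rw [Matrix.rank_eq_finrank_span_row, Matrix.rank_eq_finrank_span_row,
    Matrix.rank_eq_finrank_span_row]
  set s := Submodule.span K (Set.range (M.submatrix ((↑) : {a // p a} → m) id)) with hs
  set t := Submodule.span K (Set.range (M.submatrix ((↑) : {a // ¬ p a} → m) id)) with ht
  have hle : Submodule.span K (Set.range M) ≤ s ⊔ t := by
    rw [Submodule.span_le]
    rintro _ ⟨a, rfl⟩
    by_cases h : p a
    · exact le_sup_left (α := Submodule K (o → K)) (a := s) (b := t)
        (Submodule.subset_span ⟨⟨a, h⟩, rfl⟩)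
    · exact le_sup_right (α := Submodule K (o → K)) (a := s) (b := t)
        (Submodule.subset_span ⟨⟨a, h⟩, rfl⟩)
  exact le_trans (Submodule.finrank_mono hle)
    (Submodule.finrank_add_le_finrank_add_finrank s t)

/-- The rank of a matrix is at most the sum of the ranks of the two column-submatrices
given by splitting the columns along a predicate `p`. -/
lemma rank_le_rank_cols_add_rank_cols {K : Type*} [Field K] {m o : Type*}
    [Fintype m] [Fintype o] (M : Matrix m o K) (p : o → Prop) [DecidablePred p] :
    M.rank ≤ (M.submatrix id ((↑) : {a // p a} → o)).rank
      + (M.submatrix id ((↑) : {a // ¬ p a} → o)).rank := by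
  classical
  have h := rank_le_rank_rows_add_rank_rows Mᵀ p
  rw [Matrix.rank_transpose] at h
  refine h.trans (le_of_eq ?_)
  congr 1
  · rw [← Matrix.transpose_submatrix, Matrix.rank_transpose]
  · rw [← Matrix.transpose_submatrix, Matrix.rank_transpose]

/-- Antisymmetric matrices of odd size over a field of characteristic `≠ 2` are singular. -/
lemma det_eq_zero_of_antisymm_odd {K : Type*} [Field K] (hchar : ringChar K ≠ 2)
    {m : Type*} [Fintype m] [DecidableEq m] (hodd : Odd (Fintype.card m))
    (M : Matrix m m K) (hManti : Mᵀ = -M) : M.det = 0 := by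
  have h : M.det = -M.det := by
    conv_lhs => rw [← Matrix.det_transpose, hManti, Matrix.det_neg, hodd.neg_one_pow]
    ring
  have h2 : (2 : K) * M.det = 0 := by rw [two_mul]; linear_combination h
  rcases mul_eq_zero.mp h2 with h | h
  · exact absurd h (Ring.two_ne_zero hchar)
  · exact h

/-- A singular square matrix has rank strictly less than its size. -/
lemma rank_lt_card_of_det_eq_zero {K : Type*} [Field K] {m : Type*} [Fintype m]
    [DecidableEq m] {M : Matrix m m K} (h : M.det = 0) : M.rank < Fintype.card m := by
  obtain ⟨v, hv, hMv⟩ := (Matrix.exists_mulVec_eq_zero_iff).mpr h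
  have hker : 0 < Module.finrank K (LinearMap.ker M.mulVecLin) := by
    rw [Module.finrank_pos_iff]
    exact ⟨⟨⟨v, by simpa [Matrix.mulVecLin] using hMv⟩, 0, by simpa using hv⟩⟩
  have hrn := LinearMap.finrank_range_add_finrank_ker M.mulVecLin
  rw [Module.finrank_fintype_fun_eq_card] at hrn
  have : M.rank + Module.finrank K (LinearMap.ker M.mulVecLin) = Fintype.card m := hrn
  omega

/-- The subtype of the last block of a sigma type is equivalent to that block. -/
def lastEquiv {k : ℕ} {n : Fin (k + 1) → ℕ} :
    {a : (Σ i : Fin (k + 1), Fin (n i)) // a.1 = Fin.last k} ≃ Fin (n (Fin.last k)) where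
  toFun a := Fin.cast (congrArg n a.2) a.1.2
  invFun x := ⟨⟨Fin.last k, x⟩, rfl⟩
  left_inv := by rintro ⟨⟨i, x⟩, h⟩; dsimp only at h; subst h; rfl
  right_inv x := rfl

/-- There are `k+1` antisymmetric blocks `A 0, ..., A (Fin.last k)` over a field of
characteristic `≠ 2`, with weakly increasing nonzero sizes. Every antisymmetric
completion `M` satisfies
`rank M ≤ min ⟨n 0 + ⋯ + n k⟩ (2 (n 0 + ⋯ + n (k-1)) + rank (A (last)))`. -/
theorem stmt_12 {K : Type*} [Field K] (hchar : ringChar K ≠ 2)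
    {k : ℕ} {n : Fin (k + 1) → ℕ} (hn : ∀ i, 0 < n i) (hmono : Monotone n)
    (A : ∀ i : Fin (k + 1), Matrix (Fin (n i)) (Fin (n i)) K)
    (hanti : ∀ i, (A i)ᵀ = -(A i))
    (M : Matrix (Σ i : Fin (k + 1), Fin (n i)) (Σ i : Fin (k + 1), Fin (n i)) K)
    (hM : IsCompletion A M) (hManti : Mᵀ = -M) :
    M.rank ≤
      min (evenPart (∑ i : Fin (k + 1), n i))
        (2 * (∑ i : Fin k, n i.castSucc) + (A (Fin.last k)).rank) := by
  classical
  have hcard : Fintype.card (Σ i : Fin (k + 1), Fin (n i)) = ∑ i : Fin (k + 1), n i := by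
    simp [Fintype.card_sigma]
  -- first bound
  have h1 : M.rank ≤ evenPart (∑ i : Fin (k + 1), n i) := by
    unfold evenPart
    by_cases hev : Even (∑ i : Fin (k + 1), n i)
    · rw [if_pos hev, ← hcard]
      exact Matrix.rank_le_card_height M
    · rw [if_neg hev]
      have hodd : Odd (Fintype.card (Σ i : Fin (k + 1), Fin (n i))) := by
        rw [hcard]; exact Nat.odd_iff.mpr (Nat.not_even_iff.mp hev)
      have hdet := det_eq_zero_of_antisymm_odd hchar hodd M hManti
      have := rank_lt_card_of_det_eq_zero hdet
      rw [hcard] at this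
      omega
  -- second bound
  have h2 : M.rank ≤ 2 * (∑ i : Fin k, n i.castSucc) + (A (Fin.last k)).rank := by
    have hcard_not :
        Fintype.card {a : (Σ i : Fin (k + 1), Fin (n i)) // ¬ a.1 = Fin.last k}
          = ∑ i : Fin k, n i.castSucc := by
      have h1' : Fintype.card {a : (Σ i : Fin (k + 1), Fin (n i)) // a.1 = Fin.last k}
          = n (Fin.last k) :=
        (Fintype.card_congr (lastEquiv (n := n))).trans (Fintype.card_fin _)
      have h2' := Fintype.card_subtype_compl
        (fun a : (Σ i : Fin (k + 1), Fin (n i)) => a.1 = Fin.last k)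
      have h3' : ∑ i : Fin (k + 1), n i = (∑ i : Fin k, n i.castSucc) + n (Fin.last k) :=
        Fin.sum_univ_castSucc n
      rw [h2', h1', hcard, h3']
      omega
    have hrows := rank_le_rank_rows_add_rank_rows M
      (fun a : (Σ i : Fin (k + 1), Fin (n i)) => a.1 = Fin.last k)
    have hcols := rank_le_rank_cols_add_rank_cols
      (M.submatrix ((↑) : {a : (Σ i : Fin (k + 1), Fin (n i)) // a.1 = Fin.last k} → _) id)
      (fun a : (Σ i : Fin (k + 1), Fin (n i)) => a.1 = Fin.last k)
    have hblock :
        (M.submatrix ((↑) : {a : (Σ i : Fin (k + 1), Fin (n i)) // a.1 = Fin.last k} → _)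
            id).submatrix id
          ((↑) : {a : (Σ i : Fin (k + 1), Fin (n i)) // a.1 = Fin.last k} → _)
          = (A (Fin.last k)).submatrix lastEquiv lastEquiv := by
      ext a b
      rcases a with ⟨⟨i, x⟩, ha⟩
      rcases b with ⟨⟨j, y⟩, hb⟩
      dsimp only at ha hb
      subst ha; subst hb
      show M ⟨Fin.last k, x⟩ ⟨Fin.last k, y⟩ = _
      rw [hM (Fin.last k) x y]
      congr 1 <;> exact Fin.ext rfl
    have hbr := Matrix.rank_submatrix (A (Fin.last k)) lastEquiv lastEquiv
    rw [← hblock] at hbr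
    have hb1 : (M.submatrix
        ((↑) : {a : (Σ i : Fin (k + 1), Fin (n i)) // ¬ a.1 = Fin.last k} → _) id).rank
        ≤ ∑ i : Fin k, n i.castSucc := by
      rw [← hcard_not]; exact Matrix.rank_le_card_height _
    have hb2 : ((M.submatrix
        ((↑) : {a : (Σ i : Fin (k + 1), Fin (n i)) // a.1 = Fin.last k} → _) id).submatrix id
        ((↑) : {a : (Σ i : Fin (k + 1), Fin (n i)) // ¬ a.1 = Fin.last k} → _)).rank
        ≤ ∑ i : Fin k, n i.castSucc := by
      rw [← hcard_not]; exact Matrix.rank_le_card_width _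
    omega
  exact le_min h1 h2
end

section
/- Let K be a field of characteristic different from 2. Let n_1, n_2 ≥ 1 and let r_1 ≤ n_1 and r_2 ≤ n_2 be even natural numbers with n_2 − r_2 > n_1. Then the block matrix [[R^{r_1}_{n_1}, −T^{n_1}_{n_1,n_2}], [T^{n_1}_{n_2,n_1}, R^{r_2}_{n_2}]] (an antisymmetric completion of diag(R^{r_1}_{n_1}, R^{r_2}_{n_2})) has rank 2·n_1 + r_2. -/
set_option maxHeartbeats 1000000


open Matrix

/-- The shifted copy of `Rmat K r₁ n₁` sitting in the lower-left of a column-operation matrix. -/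
def Cmat (K : Type*) [Zero K] [One K] [Neg K] (r₁ n₁ n₂ : ℕ) : Matrix (Fin n₂) (Fin n₁) K :=
  Matrix.of fun i j =>
    if ((i : ℕ) - (n₂ - n₁)) % 2 = 0 ∧ (j : ℕ) = ((i : ℕ) - (n₂ - n₁)) + 1 ∧ (j : ℕ) < r₁
        ∧ n₂ - n₁ ≤ (i : ℕ) then 1
    else if (j : ℕ) % 2 = 0 ∧ ((i : ℕ) - (n₂ - n₁)) = (j : ℕ) + 1
        ∧ ((i : ℕ) - (n₂ - n₁)) < r₁ ∧ n₂ - n₁ ≤ (i : ℕ) then -1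
    else 0

section Aux

variable {K : Type*} [Field K] {n₁ n₂ r₁ r₂ : ℕ}

lemma TC_eq (h1 : n₁ ≤ n₂) : Tmat K n₁ n₁ n₂ * Cmat K r₁ n₁ n₂ = Rmat K r₁ n₁ := by
  ext i j
  rw [Matrix.mul_apply]
  have hi := i.2
  have hj := j.2
  rw [Finset.sum_eq_single (⟨(i : ℕ) + (n₂ - n₁), by omega⟩ : Fin n₂)]
  · simp only [Tmat, Cmat, Rmat, Matrix.of_apply, Fin.val_mk]
    split_ifs
    all_goals first | (exfalso; omega) | simp
  · intro k _ hk
    have hkv : (k : ℕ) ≠ (i : ℕ) + (n₂ - n₁) := fun hc => hk (Fin.ext hc)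
    have hk2 := k.2
    simp only [Tmat, Matrix.of_apply]
    rw [if_neg (by omega), zero_mul]
  · intro hmem
    exact absurd (Finset.mem_univ _) hmem

lemma RC_eq (h2 : r₂ ≤ n₂ - n₁) : Rmat K r₂ n₂ * Cmat K r₁ n₁ n₂ = 0 := by
  ext i j
  rw [Matrix.mul_apply]
  refine Finset.sum_eq_zero fun k _ => ?_
  by_cases hk : n₂ - n₁ ≤ (k : ℕ)
  · have : Rmat K r₂ n₂ i k = 0 := by
      have hi := i.2
      simp only [Rmat, Matrix.of_apply]
      rw [if_neg (by omega), if_neg (by omega)]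
    rw [this, zero_mul]
  · have : Cmat K r₁ n₁ n₂ k j = 0 := by
      simp only [Cmat, Matrix.of_apply]
      rw [if_neg (by omega), if_neg (by omega)]
    rw [this, mul_zero]

/-- The involution of indices matching rows to the columns of their unique nonzero entry. -/
def permFun (n₁ n₂ r₂ : ℕ) (h1 : n₁ ≤ n₂) (h2 : r₂ < n₂ - n₁) :
    Fin n₁ ⊕ Fin n₂ → Fin n₁ ⊕ Fin n₂ :=
  Sum.elim (fun i => Sum.inr ⟨(i : ℕ) + (n₂ - n₁), by have := i.2; omega⟩)
    (fun i =>
      if h' : n₂ - n₁ ≤ (i : ℕ) then Sum.inl ⟨(i : ℕ) - (n₂ - n₁), by have := i.2; omega⟩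
      else if h : (i : ℕ) < r₂ then
        (if (i : ℕ) % 2 = 0 then Sum.inr ⟨(i : ℕ) + 1, by omega⟩
         else Sum.inr ⟨(i : ℕ) - 1, by have := i.2; omega⟩)
      else Sum.inr i)

lemma permFun_involutive (h1 : n₁ ≤ n₂) (h2 : r₂ < n₂ - n₁) (h3 : r₂ % 2 = 0) :
    Function.Involutive (permFun n₁ n₂ r₂ h1 h2) := by
  intro x
  rcases x with i | i <;>
  · have hi := i.2
    simp only [permFun, Sum.elim_inl, Sum.elim_inr, Fin.val_mk]
    split_ifs
    all_goals try simp only [permFun, Sum.elim_inl, Sum.elim_inr, Fin.val_mk]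
    all_goals try split_ifs
    all_goals try rfl
    all_goals first
      | (exfalso; omega)
      | (congr 1; apply Fin.ext; simp only [Fin.val_mk]; omega)

/-- The diagonal weights. -/
def dvec (K : Type*) [Zero K] [One K] [Neg K] (n₁ n₂ r₂ : ℕ) : Fin n₁ ⊕ Fin n₂ → K :=
  Sum.elim (fun _ => -1)
    (fun i =>
      if n₂ - n₁ ≤ (i : ℕ) then 1
      else if (i : ℕ) < r₂ then (if (i : ℕ) % 2 = 0 then 1 else -1)
      else 0)

end Aux

theorem stmt_15 {K : Type*} [Field K] (hchar : ringChar K ≠ 2) {n₁ n₂ r₁ r₂ : ℕ}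
    (hn₁ : 0 < n₁) (hn₂ : 0 < n₂)
    (he₁ : Even r₁) (he₂ : Even r₂) (hr₁ : r₁ ≤ n₁) (hr₂ : r₂ ≤ n₂)
    (h : n₁ < n₂ - r₂) :
    (Matrix.fromBlocks (Rmat K r₁ n₁) (-(Tmat K n₁ n₁ n₂))
        (Tmat K n₁ n₂ n₁) (Rmat K r₂ n₂)).rank = 2 * n₁ + r₂ := by
  classical
  have h1 : n₁ ≤ n₂ := by omega
  have h2 : r₂ < n₂ - n₁ := by omega
  have h3 : r₂ % 2 = 0 := Nat.even_iff.mp he₂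
  set M := Matrix.fromBlocks (Rmat K r₁ n₁) (-(Tmat K n₁ n₁ n₂))
      (Tmat K n₁ n₂ n₁) (Rmat K r₂ n₂) with hM
  set Q := Matrix.fromBlocks (1 : Matrix (Fin n₁) (Fin n₁) K) (0 : Matrix (Fin n₁) (Fin n₂) K)
      (Cmat K r₁ n₁ n₂) (1 : Matrix (Fin n₂) (Fin n₂) K) with hQ
  have hdet : IsUnit Q.det := by
    rw [hQ, Matrix.det_fromBlocks_zero₁₂, Matrix.det_one, Matrix.det_one, one_mul]
    exact isUnit_one
  have hrank : (M * Q).rank = M.rank := Matrix.rank_mul_eq_left_of_isUnit_det Q M hdet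
  have hMQ : M * Q = Matrix.fromBlocks 0 (-(Tmat K n₁ n₁ n₂))
      (Tmat K n₁ n₂ n₁) (Rmat K r₂ n₂) := by
    rw [hM, hQ, Matrix.fromBlocks_multiply]
    simp only [Matrix.mul_one, Matrix.mul_zero, Matrix.neg_mul, TC_eq h1,
      RC_eq (le_of_lt h2), add_neg_cancel, zero_add, add_zero]
  set e : Equiv.Perm (Fin n₁ ⊕ Fin n₂) :=
    (permFun_involutive h1 h2 h3).toPerm with he
  have hsub : M * Q = (Matrix.diagonal (dvec K n₁ n₂ r₂)).submatrix
      (Equiv.refl (Fin n₁ ⊕ Fin n₂)) e := by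
    rw [hMQ]
    ext i j
    have hej : (e j) = permFun n₁ n₂ r₂ h1 h2 j := rfl
    simp only [Matrix.submatrix_apply, Equiv.refl_apply, hej]
    rcases i with i | i <;> rcases j with j | j <;>
    · have hi := i.2
      have hj := j.2
      simp only [permFun, dvec, Sum.elim_inl, Sum.elim_inr, Tmat, Rmat,
        Matrix.of_apply, Matrix.diagonal_apply,
        Matrix.fromBlocks_apply₁₁, Matrix.fromBlocks_apply₁₂, Matrix.fromBlocks_apply₂₁,
        Matrix.fromBlocks_apply₂₂, Matrix.neg_apply, Matrix.zero_apply, Fin.val_mk]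
      split_ifs
      all_goals try simp only [Sum.inl.injEq, Sum.inr.injEq, Fin.ext_iff, Fin.val_mk,
        reduceCtorEq] at *
      all_goals first | rfl | (exfalso; omega) | norm_num
  rw [← hrank, hsub, Matrix.rank_submatrix, Matrix.rank_diagonal]
  have hcount : Fintype.card {x // dvec K n₁ n₂ r₂ x ≠ 0} = 2 * n₁ + r₂ := by
    rw [Fintype.card_congr (Equiv.subtypeSum)]
    have hL : Fintype.card {a : Fin n₁ // dvec K n₁ n₂ r₂ (Sum.inl a) ≠ 0} = n₁ := by
      rw [Fintype.card_congr (Equiv.subtypeUnivEquiv (fun a => by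
        simp only [dvec, Sum.elim_inl]
        exact neg_ne_zero.mpr one_ne_zero))]
      simp
    have hR : Fintype.card {b : Fin n₂ // dvec K n₁ n₂ r₂ (Sum.inr b) ≠ 0} = n₁ + r₂ := by
      have hiff : ∀ b : Fin n₂, (dvec K n₁ n₂ r₂ (Sum.inr b) ≠ 0) ↔
          (n₂ - n₁ ≤ (b : ℕ) ∨ (b : ℕ) < r₂) := by
        intro b
        simp only [dvec, Sum.elim_inr]
        split_ifs with hb hr hp
        · simp only [ne_eq, one_ne_zero, not_false_eq_true, true_iff]; omega
        · simp only [ne_eq, one_ne_zero, not_false_eq_true, true_iff]; omega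
        · simp only [ne_eq, neg_eq_zero, one_ne_zero, not_false_eq_true, true_iff]; omega
        · simp only [ne_eq, not_true_eq_false, false_iff]; omega
      rw [Fintype.card_congr (Equiv.subtypeEquivRight hiff)]
      have hdisj : Disjoint (fun b : Fin n₂ => n₂ - n₁ ≤ (b : ℕ))
          (fun b : Fin n₂ => (b : ℕ) < r₂) := by
        rw [Pi.disjoint_iff]
        intro b
        rw [disjoint_iff_inf_le]
        intro hb
        have hb' : (n₂ - n₁ ≤ (b : ℕ)) ∧ ((b : ℕ) < r₂) := hb
        exact (by omega : False)
      rw [Fintype.card_subtype_or_disjoint _ _ hdisj]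
      have c1 : Fintype.card {b : Fin n₂ // n₂ - n₁ ≤ (b : ℕ)} = n₁ := by
        rw [Fintype.card_congr
          (⟨fun x => (⟨(x.1 : ℕ) - (n₂ - n₁), by have := x.1.2; have := x.2; omega⟩ : Fin n₁),
          fun j => ⟨⟨(j : ℕ) + (n₂ - n₁), by have := j.2; omega⟩, by simp⟩,
          fun x => by ext; simp only [Fin.val_mk]; have := x.2; omega,
          fun j => by ext; simp only [Fin.val_mk]; omega⟩ :
            {b : Fin n₂ // n₂ - n₁ ≤ (b : ℕ)} ≃ Fin n₁)]
        simp
      have c2 : Fintype.card {b : Fin n₂ // (b : ℕ) < r₂} = r₂ := by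
        rw [Fintype.card_congr (⟨fun x => (⟨(x.1 : ℕ), x.2⟩ : Fin r₂),
          fun j => ⟨⟨(j : ℕ), by have := j.2; omega⟩, j.2⟩,
          fun x => by ext; simp only [Fin.val_mk], fun j => by ext; simp only [Fin.val_mk]⟩ :
            {b : Fin n₂ // (b : ℕ) < r₂} ≃ Fin r₂)]
        simp
      rw [c1, c2]
    rw [Fintype.card_sum, hL, hR]
    omega
  rw [hcount]
end

section
/- Let K be a field of characteristic different from 2, k ≥ 1, and let A_1, ..., A_k be symmetric square matrices over K with A_i of size n_i × n_i (each n_i ≥ 1), and set r_k = rank(A_k) and s = n_1 + ... + n_{k-1}. If n_k − r_k ≥ s, then there exists a symmetric completion M of the block diagonal partial matrix diag(A_1, ..., A_k) with rank(M) = 2s + r_k. -/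
open Matrix

/-!
Put `B = diag(A_1, …, A_{k-1})` in the corner and choose the off-diagonal block `C` so that `C`
maps `ker A_k` onto `K^s`, which is possible because `dim ker A_k = n_k - r_k ≥ s`. If `(x, y)` lies
in the kernel of `M = [[B, C], [Cᵀ, A_k]]`, then `Cᵀ x = -A_k y` is orthogonal to `ker A_k` since
`A_k` is symmetric, so `x` is orthogonal to `C (ker A_k) = K^s`, i.e. `x = 0`. Hence
`ker M ≅ ker A_k ∩ ker C` has dimension `n_k - r_k - s`, and `rank M = 2 s + r_k`.
-/

open LinearMap (ker)
open Module (finrank)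

theorem Submodule.exists_map_eq_top_of_card_le_finrank {K V α : Type*} [Field K] [AddCommGroup V]
    [Module K V] [Fintype α] (p : Submodule K V) (h : Fintype.card α ≤ finrank K p) :
    ∃ f : V →ₗ[K] α → K, p.map f = ⊤ := by
  obtain ⟨u, hu⟩ := exists_linearIndependent_of_le_finrank h
  set v : α → V := p.subtype ∘ u ∘ Fintype.equivFin α
  have hv : LinearIndependent K v :=
    (hu.comp _ (Fintype.equivFin α).injective).map' p.subtype p.ker_subtype
  obtain ⟨f, hf⟩ := (Fintype.linearCombination K v).exists_leftInverse_of_injective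
    (LinearMap.ker_eq_bot.mpr hv.fintypeLinearCombination_injective)
  refine ⟨f, eq_top_iff.mpr fun w _ => ⟨Fintype.linearCombination K v w, ?_, ?_⟩⟩
  · rw [Fintype.linearCombination_apply]
    exact p.sum_mem fun a _ => p.smul_mem _ (u _).2
  · exact LinearMap.congr_fun hf w

theorem Matrix.rank_add_finrank_ker_mulVecLin {K m n : Type*} [Field K] [Fintype n]
    (A : Matrix m n K) : A.rank + finrank K (ker A.mulVecLin) = Fintype.card n := by
  rw [Matrix.rank, LinearMap.finrank_range_add_finrank_ker, Module.finrank_fintype_fun_eq_card]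

section BlockRank

variable {K α ι : Type*} [Field K] [Fintype α] [Fintype ι]
variable {A : Matrix ι ι K} {C : Matrix α ι K}

theorem eq_zero_of_transpose_mulVec_eq_mulVec (hA : Aᵀ = A)
    (hC : (ker A.mulVecLin).map C.mulVecLin = ⊤) {x : α → K} {y : ι → K}
    (h : Cᵀ *ᵥ x = A *ᵥ y) : x = 0 := by
  refine dotProduct_eq_zero x fun w => ?_
  obtain ⟨z, hz, rfl⟩ : ∃ z ∈ ker A.mulVecLin, C *ᵥ z = w := by
    simpa using hC.ge (Submodule.mem_top (x := w))
  rw [LinearMap.mem_ker, mulVecLin_apply] at hz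
  calc x ⬝ᵥ (C *ᵥ z) = (A *ᵥ y) ⬝ᵥ z := by rw [dotProduct_mulVec, ← mulVec_transpose, h]
    _ = (A *ᵥ z) ⬝ᵥ y := by rw [dotProduct_comm, dotProduct_mulVec, ← mulVec_transpose, hA]
    _ = 0 := by rw [hz, zero_dotProduct]

theorem ker_mulVecLin_fromBlocks (B : Matrix α α K) (hA : Aᵀ = A)
    (hC : (ker A.mulVecLin).map C.mulVecLin = ⊤) :
    ker (fromBlocks B C Cᵀ A).mulVecLin =
      (ker (C.mulVecLin ∘ₗ (ker A.mulVecLin).subtype)).map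
        (Sum.elimZeroLeft ∘ₗ (ker A.mulVecLin).subtype) := by
  have elimZeroLeft_eq (z : ι → K) : (Sum.elimZeroLeft z : α ⊕ ι → K) = Sum.elim (0 : α → K) z :=
    funext (Sum.elimZeroLeft_apply z)
  ext v
  obtain ⟨x, y, rfl⟩ : ∃ x y, v = Sum.elim x y := ⟨_, _, (Sum.elim_comp_inl_inr v).symm⟩
  simp only [LinearMap.mem_ker, mulVecLin_apply, fromBlocks_mulVec, Sum.elim_comp_inl,
    Sum.elim_comp_inr, ← Sum.elim_zero_zero, Sum.elim_eq_iff, Submodule.mem_map,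
    LinearMap.coe_comp, Function.comp_apply, Submodule.coe_subtype, elimZeroLeft_eq]
  constructor
  · rintro ⟨h₁, h₂⟩
    obtain rfl : x = 0 := eq_zero_of_transpose_mulVec_eq_mulVec hA hC (y := -y) <| by
      rw [mulVec_neg, eq_neg_of_add_eq_zero_left h₂]
    simp only [mulVec_zero, zero_add] at h₁ h₂
    exact ⟨⟨y, h₂⟩, h₁, rfl, rfl⟩
  · rintro ⟨⟨y, hAy⟩, hCy, rfl, rfl⟩
    simpa [hCy] using hAy

theorem rank_fromBlocks_transpose (B : Matrix α α K) (hA : Aᵀ = A)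
    (hC : (ker A.mulVecLin).map C.mulVecLin = ⊤) :
    (fromBlocks B C Cᵀ A).rank = 2 * Fintype.card α + A.rank := by
  set g := C.mulVecLin ∘ₗ (ker A.mulVecLin).subtype
  have hg : LinearMap.range g = ⊤ := by
    rw [LinearMap.range_comp, Submodule.range_subtype, hC]
  have hinj : Function.Injective (Sum.elimZeroLeft ∘ₗ (ker A.mulVecLin).subtype :
      ker A.mulVecLin →ₗ[K] α ⊕ ι → K) :=
    Sum.elim_injective'.comp Subtype.val_injective
  have hker : finrank K (ker (fromBlocks B C Cᵀ A).mulVecLin) = finrank K (ker g) := by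
    rw [ker_mulVecLin_fromBlocks B hA hC]
    exact (Submodule.equivMapOfInjective _ hinj _).finrank_eq.symm
  have hg_nullity := g.finrank_range_add_finrank_ker
  rw [hg, finrank_top, Module.finrank_fintype_fun_eq_card] at hg_nullity
  have hM_nullity := (fromBlocks B C Cᵀ A).rank_add_finrank_ker_mulVecLin
  have hA_nullity := A.rank_add_finrank_ker_mulVecLin
  rw [Fintype.card_sum] at hM_nullity
  omega

theorem exists_rank_fromBlocks_transpose [DecidableEq ι] (B : Matrix α α K) (hA : Aᵀ = A)
    (h : Fintype.card α ≤ Fintype.card ι - A.rank) :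
    ∃ C : Matrix α ι K, (fromBlocks B C Cᵀ A).rank = 2 * Fintype.card α + A.rank := by
  have hker : Fintype.card α ≤ finrank K (ker A.mulVecLin) := by
    have := A.rank_add_finrank_ker_mulVecLin
    omega
  obtain ⟨f, hf⟩ := (ker A.mulVecLin).exists_map_eq_top_of_card_le_finrank hker
  refine ⟨LinearMap.toMatrix' f, rank_fromBlocks_transpose B hA ?_⟩
  rw [← Matrix.toLin'_apply', Matrix.toLin'_toMatrix', hf]

end BlockRank

def Fin.sigmaSuccEquivSum {k : ℕ} (β : Fin (k + 1) → Type*) :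
    (Σ i, β i) ≃ (Σ i : Fin k, β i.castSucc) ⊕ β (Fin.last k) where
  toFun p := Fin.lastCases (motive := fun i => β i → _) Sum.inr (fun j x => .inl ⟨j, x⟩) p.1 p.2
  invFun q := q.elim (fun p => ⟨p.1.castSucc, p.2⟩) (fun x => ⟨Fin.last k, x⟩)
  left_inv := by
    rintro ⟨i, x⟩
    induction i using Fin.lastCases <;> simp
  right_inv := by rintro (⟨j, x⟩ | x) <;> simp

@[simp]
theorem Fin.sigmaSuccEquivSum_castSucc {k : ℕ} {β : Fin (k + 1) → Type*} (j : Fin k)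
    (x : β j.castSucc) : Fin.sigmaSuccEquivSum β ⟨j.castSucc, x⟩ = .inl ⟨j, x⟩ := by
  simp [Fin.sigmaSuccEquivSum]

@[simp]
theorem Fin.sigmaSuccEquivSum_last {k : ℕ} {β : Fin (k + 1) → Type*} (x : β (Fin.last k)) :
    Fin.sigmaSuccEquivSum β ⟨Fin.last k, x⟩ = .inr x := by
  simp [Fin.sigmaSuccEquivSum]

theorem isCompletion_submatrix_fromBlocks {K : Type*} [Field K] {k : ℕ} {n : Fin (k + 1) → ℕ}
    (A : ∀ i : Fin (k + 1), Matrix (Fin (n i)) (Fin (n i)) K)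
    (C : Matrix (Σ i : Fin k, Fin (n i.castSucc)) (Fin (n (Fin.last k))) K)
    (D : Matrix (Fin (n (Fin.last k))) (Σ i : Fin k, Fin (n i.castSucc)) K) :
    IsCompletion A
      ((fromBlocks (blockDiagonal' fun i : Fin k => A i.castSucc) C D (A (Fin.last k))).submatrix
        (Fin.sigmaSuccEquivSum _) (Fin.sigmaSuccEquivSum _)) := by
  intro i x y
  induction i using Fin.lastCases <;> simp [blockDiagonal'_apply_eq]

theorem stmt_16_general {K : Type*} [Field K]
    {k : ℕ} {n : Fin (k + 1) → ℕ}
    (A : ∀ i : Fin (k + 1), Matrix (Fin (n i)) (Fin (n i)) K)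
    (hsymm : ∀ i, (A i)ᵀ = A i)
    (h : (∑ i : Fin k, n i.castSucc) ≤ n (Fin.last k) - (A (Fin.last k)).rank) :
    ∃ M, IsCompletion A M ∧ M = Mᵀ ∧
      M.rank = 2 * (∑ i : Fin k, n i.castSucc) + (A (Fin.last k)).rank := by
  set B := blockDiagonal' fun i : Fin k => A i.castSucc
  have hB : Bᵀ = B := by
    rw [blockDiagonal'_transpose]
    exact congrArg blockDiagonal' (funext fun i => hsymm i.castSucc)
  have hcard : Fintype.card (Σ i : Fin k, Fin (n i.castSucc)) = ∑ i : Fin k, n i.castSucc := by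
    simp [Fintype.card_sigma]
  obtain ⟨C, hC⟩ := exists_rank_fromBlocks_transpose B (hsymm (Fin.last k))
    (by rwa [hcard, Fintype.card_fin])
  refine ⟨_, isCompletion_submatrix_fromBlocks A C Cᵀ, ?_, ?_⟩
  · rw [transpose_submatrix, fromBlocks_transpose, hB, transpose_transpose, hsymm]
  · rw [rank_submatrix, hC, hcard]

/-- There are `k+1` symmetric blocks `A 0, ..., A (Fin.last k)` over a field of
characteristic `≠ 2`, with nonzero sizes; `s = n 0 + ⋯ + n (k-1)`. If
`n (last) - rank (A (last)) ≥ s`, there is a symmetric completion of rank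
`2 s + rank (A (last))`. -/
theorem stmt_16 {K : Type*} [Field K] (hchar : ringChar K ≠ 2)
    {k : ℕ} {n : Fin (k + 1) → ℕ} (hn : ∀ i, 0 < n i)
    (A : ∀ i : Fin (k + 1), Matrix (Fin (n i)) (Fin (n i)) K)
    (hsymm : ∀ i, (A i)ᵀ = A i)
    (h : (∑ i : Fin k, n i.castSucc) ≤ n (Fin.last k) - (A (Fin.last k)).rank) :
    ∃ M, IsCompletion A M ∧ M = Mᵀ ∧
      M.rank = 2 * (∑ i : Fin k, n i.castSucc) + (A (Fin.last k)).rank :=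
  stmt_16_general A hsymm h
end
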